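/- arXiv:1005.4194 — 4 statements merged into one kernel-verified Lean document; each statement's English description precedes it below -/
import Mathlib

section
/- For all 0 ≤ i < j < k ≤ r, the trinomial g_{i,j,k} lies in the 𝕂-linear span of the trinomials g_{s,s+1,s+2}, 0 ≤ s ≤ r−2; in particular g_{i,j,k} lies in the ideal ⟨g_{s,s+1,s+2}; 0 ≤ s ≤ r−2⟩ of S. -/
open MvPolynomial

section Setup

variable (𝕂 : Type) [Field 𝕂] [IsAlgClosed 𝕂] [CharZero 𝕂]
variable (r : ℕ) (a : Fin (r+1) → 𝕂 × 𝕂) (n : Fin (r+1) → ℕ)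
variable (l : ∀ i : Fin (r+1), Fin (n i) → ℕ)

/-- The index set of the variables `T_{ij}`, `0 ≤ i ≤ r`, `1 ≤ j ≤ n_i`. -/
abbrev Idx (r : ℕ) (n : Fin (r+1) → ℕ) := Σ i : Fin (r+1), Fin (n i)

/-- The monomial `T_i^{l_i} = T_{i1}^{l_{i1}} ⋯ T_{i n_i}^{l_{i n_i}}`. -/
noncomputable def mono (i : Fin (r+1)) : MvPolynomial (Idx r n) 𝕂 :=
  ∏ j : Fin (n i), (X ⟨i, j⟩ : MvPolynomial (Idx r n) 𝕂) ^ l i j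

/-- `α_{ij} = det(a_i, a_j)`. -/
def alpha (i k : Fin (r+1)) : 𝕂 := (a i).1 * (a k).2 - (a k).1 * (a i).2

/-- The trinomial `g_{i,j,k} = α_{jk} T_i^{l_i} + α_{ki} T_j^{l_j} + α_{ij} T_k^{l_k}`. -/
noncomputable def gPoly (i j k : Fin (r+1)) : MvPolynomial (Idx r n) 𝕂 :=
  C (alpha 𝕂 r a j k) * mono 𝕂 r n l i + C (alpha 𝕂 r a k i) * mono 𝕂 r n l j +
    C (alpha 𝕂 r a i j) * mono 𝕂 r n l k

/-- The ideal `⟨g_{i,i+1,i+2} ; 0 ≤ i ≤ r-2⟩`. -/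
noncomputable def relIdeal : Ideal (MvPolynomial (Idx r n) 𝕂) :=
  Ideal.span { p | ∃ i j k : Fin (r+1), (j : ℕ) = (i : ℕ) + 1 ∧ (k : ℕ) = (i : ℕ) + 2 ∧
    p = gPoly 𝕂 r a n l i j k }

/-- The ring `R(A, 𝔫, L)`. -/
abbrev RAnL := MvPolynomial (Idx r n) 𝕂 ⧸ relIdeal 𝕂 r a n l

/-- Row `i` (for `1 ≤ i ≤ r`) of the `r × n` matrix `P`. -/
def Prow (i : Fin r) : Idx r n → ℤ :=
  fun x => if x.1 = 0 then -(l x.1 x.2 : ℤ) else if x.1 = i.succ then (l x.1 x.2 : ℤ) else 0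

/-- The subgroup of `ℤ^n` generated by the rows of `P`. -/
def rowSpan : AddSubgroup (Idx r n → ℤ) := AddSubgroup.closure (Set.range (Prow r n l))

/-- The grading group `K = ℤ^n / P^*(M)`. -/
abbrev Kgrp := (Idx r n → ℤ) ⧸ rowSpan r n l

/-- The projection `Q : ℤ^n → K`. -/
noncomputable def Qmap : (Idx r n → ℤ) →+ Kgrp r n l := QuotientAddGroup.mk' (rowSpan r n l)

/-- The weight `deg T_{ij} := Q(e_{ij})` defining the `K`-grading of `S`. -/
noncomputable def wK : Idx r n → Kgrp r n l := fun x => Qmap r n l (Pi.single x (1 : ℤ))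

/-- An element of `R(A,𝔫,L)` is homogeneous of degree `d` if it is the image of a
`K`-homogeneous polynomial of degree `d`. -/
def IsHomog (d : Kgrp r n l) (y : RAnL 𝕂 r a n l) : Prop :=
  ∃ p : MvPolynomial (Idx r n) 𝕂, p.IsWeightedHomogeneous (wK r n l) d ∧
    Ideal.Quotient.mk (relIdeal 𝕂 r a n l) p = y

/-- `K`-prime elements of `R(A,𝔫,L)`. -/
def KPrime (f : RAnL 𝕂 r a n l) : Prop :=
  (∃ d, IsHomog 𝕂 r a n l d f) ∧ f ≠ 0 ∧ ¬ IsUnit f ∧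
    ∀ x y : RAnL 𝕂 r a n l, (∃ d, IsHomog 𝕂 r a n l d x) → (∃ d, IsHomog 𝕂 r a n l d y) →
      f ∣ x * y → f ∣ x ∨ f ∣ y

end Setup

theorem det_ne_zero_of_linearIndependent_pair {K : Type*} [Field K] {u v : K × K}
    (h : LinearIndependent K ![u, v]) : u.1 * v.2 - v.1 * u.2 ≠ 0 := by
  intro hdet
  have hli := LinearIndependent.pair_iff.1 h
  have hcomb (s t : K) : s • u + t • v = (s * u.1 + t * v.1, s * u.2 + t * v.2) := rfl
  -- A vanishing determinant makes `v.2 • u - u.2 • v` and `v.1 • u - u.1 • v` both zero.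
  have hv₂ := hli v.2 (-u.2) (by
    rw [hcomb, Prod.mk_eq_zero]; exact ⟨by linear_combination hdet, by ring⟩)
  have hv₁ := hli v.1 (-u.1) (by
    rw [hcomb, Prod.mk_eq_zero]; exact ⟨by ring, by linear_combination -hdet⟩)
  have hv : v = 0 := Prod.ext hv₁.1 hv₂.1
  exact one_ne_zero (hli 0 1 (by simp [hv])).2

section Trinomials

variable {𝕂 : Type} [Field 𝕂] {r : ℕ} {a : Fin (r+1) → 𝕂 × 𝕂} {n : Fin (r+1) → ℕ}
  {l : ∀ i : Fin (r+1), Fin (n i) → ℕ}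

/-- The three-term Plücker relation among the determinants `α`, transported to the trinomials. -/
theorem alpha_smul_gPoly (p q i j k : Fin (r+1)) :
    alpha 𝕂 r a p q • gPoly 𝕂 r a n l i j k =
      alpha 𝕂 r a j k • gPoly 𝕂 r a n l p q i + alpha 𝕂 r a k i • gPoly 𝕂 r a n l p q j +
        alpha 𝕂 r a i j • gPoly 𝕂 r a n l p q k := by
  simp only [gPoly, alpha, smul_eq_C_mul, map_sub, map_mul]
  ring

theorem gPoly_rotate (p q i : Fin (r+1)) :
    gPoly 𝕂 r a n l p q i = gPoly 𝕂 r a n l i p q := by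
  simp only [gPoly]
  ring

theorem gPoly_self_left (p q : Fin (r+1)) : gPoly 𝕂 r a n l p q p = 0 := by
  simp only [gPoly, alpha, map_sub, map_mul]
  ring

theorem gPoly_self_right (p q : Fin (r+1)) : gPoly 𝕂 r a n l p q q = 0 := by
  simp only [gPoly, alpha, map_sub, map_mul]
  ring

variable (𝕂 r a n l) in
def consecutiveTrinomials : Set (MvPolynomial (Idx r n) 𝕂) :=
  { p | ∃ s t u : Fin (r+1), (t : ℕ) = (s : ℕ) + 1 ∧ (u : ℕ) = (s : ℕ) + 2 ∧
    p = gPoly 𝕂 r a n l s t u }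

/-- Induction on `k`: for `k ≥ 2`, the Plücker relation with `(p, q) = (k-2, k-1)` expresses
`g_{i,j,k}` through the generator `g_{k-2,k-1,k}` and trinomials with largest index `k - 1`. -/
theorem gPoly_mem_span_consecutiveTrinomials
    (ha : ∀ s t : Fin (r+1), (t : ℕ) = (s : ℕ) + 1 → alpha 𝕂 r a s t ≠ 0)
    {i j k : Fin (r+1)} (hij : i < j) (hjk : j < k) :
    gPoly 𝕂 r a n l i j k ∈ Submodule.span 𝕂 (consecutiveTrinomials 𝕂 r a n l) := by
  induction k using WellFoundedLT.induction generalizing i j with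
  | _ k ih =>
    have hij' : (i : ℕ) < j := hij
    have hjk' : (j : ℕ) < k := hjk
    obtain ⟨p, hp⟩ : ∃ p : Fin (r+1), (p : ℕ) + 2 = k := ⟨⟨k - 2, by omega⟩, by dsimp only; omega⟩
    obtain ⟨q, hq⟩ : ∃ q : Fin (r+1), (q : ℕ) + 1 = k := ⟨⟨k - 1, by omega⟩, by dsimp only; omega⟩
    have hgen : gPoly 𝕂 r a n l p q k ∈ Submodule.span 𝕂 (consecutiveTrinomials 𝕂 r a n l) :=
      Submodule.subset_span ⟨p, q, k, by omega, by omega, rfl⟩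
    have hbelow : ∀ m : Fin (r+1), (m : ℕ) < k →
        gPoly 𝕂 r a n l p q m ∈ Submodule.span 𝕂 (consecutiveTrinomials 𝕂 r a n l) := by
      intro m hm
      rcases eq_or_ne m p with rfl | hmp
      · rw [gPoly_self_left]
        exact zero_mem _
      rcases eq_or_ne m q with rfl | hmq
      · rw [gPoly_self_right]
        exact zero_mem _
      have hmp' : (m : ℕ) ≠ p := Fin.val_ne_of_ne hmp
      have hmq' : (m : ℕ) ≠ q := Fin.val_ne_of_ne hmq
      rw [gPoly_rotate]
      exact ih q (Fin.lt_def.2 (by omega)) (Fin.lt_def.2 (by omega)) (Fin.lt_def.2 (by omega))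
    rw [← Submodule.smul_mem_iff _ (ha p q (by omega)), alpha_smul_gPoly p q]
    exact add_mem (add_mem (Submodule.smul_mem _ _ (hbelow i (by omega)))
      (Submodule.smul_mem _ _ (hbelow j (by omega)))) (Submodule.smul_mem _ _ hgen)

end Trinomials

section Statement1

theorem statement1_general (𝕂 : Type) [Field 𝕂]
    (r : ℕ) (a : Fin (r+1) → 𝕂 × 𝕂)
    (ha : ∀ i k : Fin (r+1), i ≠ k → LinearIndependent 𝕂 ![a i, a k])
    (n : Fin (r+1) → ℕ)
    (l : ∀ i : Fin (r+1), Fin (n i) → ℕ)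
    (i j k : Fin (r+1)) (hij : i < j) (hjk : j < k) :
    gPoly 𝕂 r a n l i j k ∈ Submodule.span 𝕂
      { p : MvPolynomial (Idx r n) 𝕂 | ∃ s t u : Fin (r+1),
        (t : ℕ) = (s : ℕ) + 1 ∧ (u : ℕ) = (s : ℕ) + 2 ∧ p = gPoly 𝕂 r a n l s t u } ∧
    gPoly 𝕂 r a n l i j k ∈ relIdeal 𝕂 r a n l := by
  have hadj : ∀ s t : Fin (r+1), (t : ℕ) = (s : ℕ) + 1 → alpha 𝕂 r a s t ≠ 0 :=
    fun s t hst => det_ne_zero_of_linearIndependent_pair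
      (ha s t fun h => by rw [h] at hst; omega)
  have hspan := gPoly_mem_span_consecutiveTrinomials (n := n) (l := l) hadj hij hjk
  exact ⟨hspan, Submodule.span_le_restrictScalars 𝕂 _ _ hspan⟩

/-- Every trinomial `g_{i,j,k}`, `0 ≤ i < j < k ≤ r`, lies in the `𝕂`-linear span of the
trinomials `g_{s,s+1,s+2}`, `0 ≤ s ≤ r-2`; in particular it lies in the ideal generated
by them. -/
theorem statement1 (𝕂 : Type) [Field 𝕂] [IsAlgClosed 𝕂] [CharZero 𝕂]
    (r : ℕ) (hr : 1 ≤ r) (a : Fin (r+1) → 𝕂 × 𝕂)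
    (ha : ∀ i k : Fin (r+1), i ≠ k → LinearIndependent 𝕂 ![a i, a k])
    (n : Fin (r+1) → ℕ) (hn : ∀ i, 0 < n i)
    (l : ∀ i : Fin (r+1), Fin (n i) → ℕ) (hl : ∀ i j, 0 < l i j)
    (i j k : Fin (r+1)) (hij : i < j) (hjk : j < k) :
    gPoly 𝕂 r a n l i j k ∈ Submodule.span 𝕂
      { p : MvPolynomial (Idx r n) 𝕂 | ∃ s t u : Fin (r+1),
        (t : ℕ) = (s : ℕ) + 1 ∧ (u : ℕ) = (s : ℕ) + 2 ∧ p = gPoly 𝕂 r a n l s t u } ∧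
    gPoly 𝕂 r a n l i j k ∈ relIdeal 𝕂 r a n l :=
  statement1_general 𝕂 r a ha n l i j k hij hjk

end Statement1
end

section
/- The K-grading of R(A,𝔫,L) is pointed: the degree-zero homogeneous component of R(A,𝔫,L) equals 𝕂·1. -/
open MvPolynomial

/-! A polynomial that is `K`-homogeneous of degree `0` is constant as soon as no nonzero monomial
has degree `0`. The exponent vector of such a monomial is a nonnegative vector in the row span of
`P`, say `∑ cᵢ Pᵢ`. Its entries in block `i ≥ 1` are `cᵢ l_{ij}`, so every `cᵢ ≥ 0`, while its
entries in block `0` are `-(∑ cᵢ) l_{0j}`, so `∑ cᵢ ≤ 0`; since `n_i > 0` and `l_{ij} > 0` both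
kinds of entries exist, hence all `cᵢ` vanish. -/

namespace MvPolynomial

variable {σ R M : Type*} [CommSemiring R] [AddCommMonoid M]

theorem IsWeightedHomogeneous.eq_C_coeff_zero {w : σ → M}
    (hw : ∀ m : σ →₀ ℕ, Finsupp.weight w m = 0 → m = 0) {p : MvPolynomial σ R}
    (hp : p.IsWeightedHomogeneous w 0) : p = C (p.coeff 0) := by
  classical
  ext m
  rw [coeff_C]
  split_ifs with hm
  · rw [hm]
  · by_contra h
    exact hm (hw m (hp h)).symm

end MvPolynomial

section Pointed

variable {r : ℕ} {n : Fin (r+1) → ℕ} {l : ∀ i : Fin (r+1), Fin (n i) → ℕ}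

theorem sum_smul_Prow_apply_succ (c : Fin r → ℤ) (i : Fin r) (j : Fin (n i.succ)) :
    (∑ k, c k • Prow r n l k) ⟨i.succ, j⟩ = c i * l i.succ j := by
  rw [Finset.sum_apply, Finset.sum_eq_single i]
  · simp [Prow, Fin.succ_ne_zero]
  · intro k _ hk
    simp [Prow, Fin.succ_ne_zero, (Fin.succ_injective r).ne hk.symm]
  · simp

theorem sum_smul_Prow_apply_zero (c : Fin r → ℤ) (j : Fin (n 0)) :
    (∑ k, c k • Prow r n l k) ⟨0, j⟩ = -(∑ k, c k) * l 0 j := by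
  simp [Finset.sum_apply, Prow, Finset.sum_mul]

theorem eq_zero_of_mem_rowSpan_of_nonneg (hn : ∀ i, 0 < n i) (hl : ∀ i j, 0 < l i j)
    {v : Idx r n → ℤ} (hv : v ∈ rowSpan r n l) (hv0 : 0 ≤ v) : v = 0 := by
  obtain ⟨c, rfl⟩ := AddSubgroup.exists_of_mem_closure_range _ _ hv
  have hl' : ∀ i j, (0 : ℤ) < l i j := fun i j => by exact_mod_cast hl i j
  have hc_nonneg : ∀ i, 0 ≤ c i := fun i => by
    have h := hv0 ⟨i.succ, ⟨0, hn _⟩⟩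
    rw [Pi.zero_apply, sum_smul_Prow_apply_succ] at h
    exact (mul_nonneg_iff_of_pos_right (hl' _ _)).1 h
  have hsum_nonpos : ∑ i, c i ≤ 0 := by
    have h := hv0 ⟨0, ⟨0, hn 0⟩⟩
    rw [Pi.zero_apply, sum_smul_Prow_apply_zero] at h
    linarith [(mul_nonneg_iff_of_pos_right (hl' _ _)).1 h]
  have hc : c = 0 := funext fun i =>
    (Finset.sum_eq_zero_iff_of_nonneg fun i _ => hc_nonneg i).1
      (le_antisymm hsum_nonpos (Finset.sum_nonneg fun i _ => hc_nonneg i)) i (Finset.mem_univ i)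
  simp [hc]

theorem weight_wK (m : Idx r n →₀ ℕ) :
    Finsupp.weight (wK r n l) m = Qmap r n l (fun x => (m x : ℤ)) := by
  classical
  simp only [Finsupp.weight_eq_sum, wK, ← map_nsmul, ← map_sum, ← Pi.single_smul, nsmul_eq_mul,
    mul_one, Finset.univ_sum_single]

theorem eq_zero_of_weight_wK_eq_zero (hn : ∀ i, 0 < n i) (hl : ∀ i j, 0 < l i j)
    {m : Idx r n →₀ ℕ} (hm : Finsupp.weight (wK r n l) m = 0) : m = 0 := by
  rw [weight_wK, Qmap, QuotientAddGroup.mk'_apply, QuotientAddGroup.eq_zero_iff] at hm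
  have h := eq_zero_of_mem_rowSpan_of_nonneg hn hl hm fun x => Int.natCast_nonneg _
  ext x
  simpa using congrFun h x

end Pointed

section Statement4

theorem statement4_general (𝕂 : Type) [Field 𝕂]
    (r : ℕ) (a : Fin (r+1) → 𝕂 × 𝕂)
    (n : Fin (r+1) → ℕ) (hn : ∀ i, 0 < n i)
    (l : ∀ i : Fin (r+1), Fin (n i) → ℕ) (hl : ∀ i j, 0 < l i j) :
    ∀ y : RAnL 𝕂 r a n l, IsHomog 𝕂 r a n l 0 y ↔
      ∃ c : 𝕂, y = algebraMap 𝕂 (RAnL 𝕂 r a n l) c := by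
  intro y
  constructor
  · rintro ⟨p, hp, rfl⟩
    refine ⟨p.coeff 0, ?_⟩
    rw [← Ideal.Quotient.mk_algebraMap, MvPolynomial.algebraMap_eq]
    exact congrArg _ (hp.eq_C_coeff_zero fun _ => eq_zero_of_weight_wK_eq_zero hn hl)
  · rintro ⟨c, rfl⟩
    refine ⟨C c, isWeightedHomogeneous_C _ _, ?_⟩
    rw [← Ideal.Quotient.mk_algebraMap, MvPolynomial.algebraMap_eq]

/-- The `K`-grading of `R(A,𝔫,L)` is pointed: the homogeneous component of degree
`0 ∈ K` is exactly `𝕂·1`. -/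
theorem statement4 (𝕂 : Type) [Field 𝕂] [IsAlgClosed 𝕂] [CharZero 𝕂]
    (r : ℕ) (hr : 1 ≤ r) (a : Fin (r+1) → 𝕂 × 𝕂)
    (ha : ∀ i k : Fin (r+1), i ≠ k → LinearIndependent 𝕂 ![a i, a k])
    (n : Fin (r+1) → ℕ) (hn : ∀ i, 0 < n i)
    (l : ∀ i : Fin (r+1), Fin (n i) → ℕ) (hl : ∀ i j, 0 < l i j) :
    ∀ y : RAnL 𝕂 r a n l, IsHomog 𝕂 r a n l 0 y ↔
      ∃ c : 𝕂, y = algebraMap 𝕂 (RAnL 𝕂 r a n l) c :=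
  statement4_general 𝕂 r a n hn l hl

end Statement4
end

section
/- The abelian group K = ℤ^n/(subgroup generated by the rows of P) is torsion free if and only if the integers l_i := gcd(l_{i1}, …, l_{in_i}), i = 0, …, r, are pairwise coprime. -/
/-!
The row span of `P` consists of the vectors `(c_t l_{tj})` with `∑ c_t = 0`. If `m x` is such a
vector then `m ∣ c_t l_t` for every `t`, and since `c_t = -∑_{s ≠ t} c_s` also
`m ∣ c_t ∏_{s ≠ t} l_s`; when the `l_t` are pairwise coprime this forces `m ∣ c_t`, so `x` lies
in the row span. Conversely, if `q = gcd(l_i, l_{i'}) > 1`, the row-span vector with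
`c = e_i - e_{i'}` is divisible by `q`, and its quotient by `q` is a nonzero torsion element of `K`.
-/

open MvPolynomial

theorem dvd_of_sum_eq_zero_of_dvd_mul {ι : Type*} [Fintype ι] [DecidableEq ι] {L c : ι → ℤ}
    (hL : Pairwise fun s t => IsCoprime (L s) (L t)) (hc : ∑ t, c t = 0) {m : ℤ}
    (h : ∀ t, m ∣ c t * L t) (t : ι) : m ∣ c t := by
  set B := ∏ s ∈ Finset.univ.erase t, L s
  have hother : ∀ s ∈ Finset.univ.erase t, m ∣ c s * B := fun s hs =>
    (h s).trans (mul_dvd_mul_left _ (Finset.dvd_prod_of_mem L hs))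
  have hself : m ∣ c t * B := by
    have hct : c t = -∑ s ∈ Finset.univ.erase t, c s := by
      rw [eq_neg_iff_add_eq_zero, Finset.add_sum_erase _ _ (Finset.mem_univ t), hc]
    rw [hct, neg_mul, Finset.sum_mul, dvd_neg]
    exact Finset.dvd_sum hother
  obtain ⟨u, v, huv⟩ : IsCoprime (L t) B :=
    IsCoprime.prod_right fun s hs => hL (Finset.ne_of_mem_erase hs).symm
  have hct : c t = u * (c t * L t) + v * (c t * B) := by linear_combination -c t * huv
  rw [hct]
  exact dvd_add (dvd_mul_of_dvd_right (h t) _) (dvd_mul_of_dvd_right hself _)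

theorem dvd_mul_finset_gcd {ι : Type*} {s : Finset ι} {f : ι → ℕ} {m : ℕ} {c : ℤ}
    (h : ∀ j ∈ s, (m : ℤ) ∣ c * f j) : (m : ℤ) ∣ c * (s.gcd f : ℕ) := by
  simp only [Int.natCast_dvd, Int.natAbs_mul, Int.natAbs_natCast] at h ⊢
  rw [← normalize_eq c.natAbs, ← Finset.gcd_mul_left]
  exact Finset.dvd_gcd h

section RowSpan

variable {r : ℕ} {n : Fin (r+1) → ℕ} {l : ∀ i : Fin (r+1), Fin (n i) → ℕ}

theorem sum_smul_Prow_apply (d : Fin r → ℤ) (t : Fin (r+1)) (j : Fin (n t)) :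
    (∑ i, d i • Prow r n l i) ⟨t, j⟩ = (Fin.cons (-∑ i, d i) d : Fin (r+1) → ℤ) t * l t j := by
  simp only [Finset.sum_apply, Pi.smul_apply, smul_eq_mul, Prow]
  cases t using Fin.cases with
  | zero => simp [Finset.sum_mul]
  | succ s =>
    simp only [Fin.succ_ne_zero, if_false, Fin.succ_inj, mul_ite, mul_zero, Fin.cons_succ]
    rw [Finset.sum_ite_eq]
    simp

theorem mem_rowSpan_iff {x : Idx r n → ℤ} :
    x ∈ rowSpan r n l ↔ ∃ c : Fin (r+1) → ℤ, ∑ t, c t = 0 ∧ ∀ t j, x ⟨t, j⟩ = c t * l t j := by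
  rw [rowSpan, ← Submodule.span_int_eq_addSubgroupClosure, Submodule.mem_toAddSubgroup,
    Submodule.mem_span_range_iff_exists_fun]
  constructor
  · rintro ⟨d, rfl⟩
    exact ⟨Fin.cons (-∑ i, d i) d, by simp [Fin.sum_cons], sum_smul_Prow_apply d⟩
  · rintro ⟨c, hc, hx⟩
    refine ⟨Fin.tail c, funext fun ⟨t, j⟩ => ?_⟩
    have hc0 : c 0 = -∑ i, Fin.tail c i := by
      rw [Fin.sum_univ_succ] at hc
      exact eq_neg_of_add_eq_zero_left hc
    rw [sum_smul_Prow_apply, hx, ← hc0, Fin.cons_self_tail]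

theorem eq_zero_of_isOfFinAddOrder_of_coprime
    (hcop : ∀ i i' : Fin (r+1), i ≠ i' →
      Nat.Coprime (Finset.univ.gcd (l i)) (Finset.univ.gcd (l i')))
    {g : Kgrp r n l} (hg : IsOfFinAddOrder g) : g = 0 := by
  obtain ⟨x, rfl⟩ := QuotientAddGroup.mk_surjective g
  obtain ⟨m, hm, hmx⟩ := isOfFinAddOrder_iff_nsmul_eq_zero.mp hg
  rw [← QuotientAddGroup.mk_nsmul, QuotientAddGroup.eq_zero_iff, mem_rowSpan_iff] at hmx
  obtain ⟨c, hc, hmc⟩ := hmx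
  have hmc' : ∀ t j, c t * l t j = m * x ⟨t, j⟩ := fun t j => by
    rw [← hmc, Pi.smul_apply, nsmul_eq_mul]
  have hdvd : ∀ t, (m : ℤ) ∣ c t :=
    dvd_of_sum_eq_zero_of_dvd_mul (L := fun t => (Finset.univ.gcd (l t) : ℕ))
      (fun t t' h => Nat.isCoprime_iff_coprime.mpr (hcop t t' h)) hc
      fun t => dvd_mul_finset_gcd fun j _ => ⟨x ⟨t, j⟩, hmc' t j⟩
  choose d hd using hdvd
  have hm0 : (m : ℤ) ≠ 0 := by exact_mod_cast hm.ne'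
  rw [QuotientAddGroup.eq_zero_iff, mem_rowSpan_iff]
  refine ⟨d, ?_, fun t j => ?_⟩
  · apply mul_left_cancel₀ hm0
    rw [Finset.mul_sum, ← Finset.sum_congr rfl fun t _ => hd t, hc, mul_zero]
  · apply mul_left_cancel₀ hm0
    rw [← hmc', hd, mul_assoc]

theorem exists_ne_zero_isOfFinAddOrder_of_not_coprime (hn : ∀ i, 0 < n i)
    (hl : ∀ i j, 0 < l i j) {i i' : Fin (r+1)} (hii' : i ≠ i')
    (h : ¬ Nat.Coprime (Finset.univ.gcd (l i)) (Finset.univ.gcd (l i'))) :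
    ∃ g : Kgrp r n l, g ≠ 0 ∧ IsOfFinAddOrder g := by
  set q := Nat.gcd (Finset.univ.gcd (l i)) (Finset.univ.gcd (l i'))
  have hq : 1 < q := by
    have hq0 : q ≠ 0 := fun hq => (hl i ⟨0, hn i⟩).ne'
      (Finset.gcd_eq_zero_iff.mp (Nat.eq_zero_of_gcd_eq_zero_left hq) _ (Finset.mem_univ _))
    have hq1 : q ≠ 1 := h
    omega
  let c : Fin (r+1) → ℤ := Pi.single i 1 - Pi.single i' 1
  have hc : ∀ t j, (q : ℤ) ∣ c t * l t j := by
    intro t j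
    by_cases hti : t = i
    · subst hti
      exact dvd_mul_of_dvd_right (Int.natCast_dvd_natCast.mpr
        ((Nat.gcd_dvd_left _ _).trans (Finset.gcd_dvd (Finset.mem_univ j)))) _
    by_cases hti' : t = i'
    · subst hti'
      exact dvd_mul_of_dvd_right (Int.natCast_dvd_natCast.mpr
        ((Nat.gcd_dvd_right _ _).trans (Finset.gcd_dvd (Finset.mem_univ j)))) _
    simp [c, hti, hti']
  -- `q • x` is the element of the row span with coefficients `c = e_i - e_{i'}`
  let x : Idx r n → ℤ := fun p => c p.1 * l p.1 p.2 / q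
  refine ⟨QuotientAddGroup.mk x, ?_, ?_⟩
  · rw [Ne, QuotientAddGroup.eq_zero_iff, mem_rowSpan_iff]
    rintro ⟨d, -, hd⟩
    set j₀ : Fin (n i) := ⟨0, hn i⟩
    have hx : (l i j₀ : ℤ) / q = d i * l i j₀ := by simpa [x, c, hii'] using hd i j₀
    have hdiv : (q : ℤ) ∣ l i j₀ := by simpa [c, hii'] using hc i j₀
    have hqd : (q : ℤ) * d i = 1 := by
      have hl₀ : (l i j₀ : ℤ) ≠ 0 := by exact_mod_cast (hl i j₀).ne'
      have hcancel := Int.ediv_mul_cancel hdiv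
      rw [hx] at hcancel
      exact mul_left_cancel₀ hl₀ (by linear_combination hcancel)
    have : q = 1 := Nat.dvd_one.mp (Int.natCast_dvd_natCast.mp ⟨d i, hqd.symm⟩)
    omega
  · refine isOfFinAddOrder_iff_nsmul_eq_zero.mpr ⟨q, by omega, ?_⟩
    rw [← QuotientAddGroup.mk_nsmul, QuotientAddGroup.eq_zero_iff, mem_rowSpan_iff]
    refine ⟨c, by simp [c], fun t j => ?_⟩
    rw [Pi.smul_apply, nsmul_eq_mul]
    exact Int.mul_ediv_cancel' (hc t j)

end RowSpan

theorem statement8_general (r : ℕ)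
    (n : Fin (r+1) → ℕ) (hn : ∀ i, 0 < n i)
    (l : ∀ i : Fin (r+1), Fin (n i) → ℕ) (hl : ∀ i j, 0 < l i j) :
    (∀ g : Kgrp r n l, g ≠ 0 → ¬IsOfFinAddOrder g) ↔
      ∀ i i' : Fin (r+1), i ≠ i' →
        Nat.Coprime (Finset.univ.gcd fun j : Fin (n i) => l i j)
          (Finset.univ.gcd fun j : Fin (n i') => l i' j) := by
  constructor
  · intro htf i i' hii'
    by_contra h
    obtain ⟨g, hg0, hg⟩ := exists_ne_zero_isOfFinAddOrder_of_not_coprime hn hl hii' h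
    exact htf g hg0 hg
  · intro hcop g hg0 hg
    exact hg0 (eq_zero_of_isOfFinAddOrder_of_coprime hcop hg)

/-- `K = ℤ^n / (row span of P)` is torsion free if and only if the integers
`l_i = gcd(l_{i1}, …, l_{i n_i})`, `i = 0, …, r`, are pairwise coprime. -/
theorem statement8 (r : ℕ) (hr : 1 ≤ r)
    (n : Fin (r+1) → ℕ) (hn : ∀ i, 0 < n i)
    (l : ∀ i : Fin (r+1), Fin (n i) → ℕ) (hl : ∀ i j, 0 < l i j) :
    (∀ g : Kgrp r n l, g ≠ 0 → ¬IsOfFinAddOrder g) ↔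
      ∀ i i' : Fin (r+1), i ≠ i' →
        Nat.Coprime (Finset.univ.gcd fun j : Fin (n i) => l i j)
          (Finset.univ.gcd fun j : Fin (n i') => l i' j) :=
  statement8_general r n hn l hl
end

section
/- If R(A,𝔫,L) is a unique factorization domain and n_i·l_{ij} > 1 holds for a given pair (i,j), then the class of T_{ij} is a prime element of R(A,𝔫,L). -/
/-! Give `T_{ij}` the weight `c / (n_i l_{ij})`, where `c = ∏ n_i l_{ij}`. Then every monomial
`T_i^{l_i}`, hence every relation `g_{i,i+1,i+2}`, is homogeneous of degree `c`, and `T_{ij}`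
has degree `< c` exactly when `n_i l_{ij} > 1`. In the graded domain `R = S / I`, a
factorization of a homogeneous element can be replaced by one into homogeneous factors: the map
`p ↦ ∑_d p_d t^d` descends to `R → R[t]` and turns it into a factorization of a monomial in `t`.
Since `I` contains no nonzero polynomial of degree `< c`, a homogeneous factorization of `T_{ij}`
in `R` is already one in `S`, where `T_{ij}` is irreducible. Finally, in a domain with prime
factorizations every irreducible element is prime. -/

open MvPolynomial

open MvPolynomial

namespace Polynomial

theorem eq_monomial_of_natTrailingDegree_eq_natDegree {A : Type*} [Semiring A] {p : A[X]}
    (h : p.natTrailingDegree = p.natDegree) : p = monomial p.natDegree p.leadingCoeff := by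
  ext j
  rw [coeff_monomial]
  split_ifs with hj
  · rw [← hj, leadingCoeff]
  · rcases lt_or_gt_of_ne hj with hlt | hgt
    · exact coeff_eq_zero_of_natDegree_lt hlt
    · exact coeff_eq_zero_of_lt_natTrailingDegree (h ▸ hgt)

theorem exists_eq_monomial_of_mul_eq_monomial {A : Type*} [Semiring A] [NoZeroDivisors A]
    {p q : A[X]} {k : ℕ} {a : A} (ha : a ≠ 0) (h : p * q = monomial k a) :
    ∃ d e b c, d + e = k ∧ p = monomial d b ∧ q = monomial e c := by
  have hpq : p * q ≠ 0 := h ▸ (monomial_eq_zero_iff a k).not.mpr ha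
  have hp : p ≠ 0 := left_ne_zero_of_mul hpq
  have hq : q ≠ 0 := right_ne_zero_of_mul hpq
  have hdeg : p.natDegree + q.natDegree = k := by
    rw [← natDegree_mul hp hq, h, natDegree_monomial_eq k ha]
  have htrail : p.natTrailingDegree + q.natTrailingDegree = k := by
    rw [← natTrailingDegree_mul hp hq, h, natTrailingDegree_monomial ha]
  have hp' := natTrailingDegree_le_natDegree p
  have hq' := natTrailingDegree_le_natDegree q
  exact ⟨_, _, _, _, hdeg, eq_monomial_of_natTrailingDegree_eq_natDegree (by omega),
    eq_monomial_of_natTrailingDegree_eq_natDegree (by omega)⟩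

end Polynomial

namespace MvPolynomial

variable {σ R : Type*} [CommRing R] (w : σ → ℕ)

noncomputable def weightedGradingHom : MvPolynomial σ R →ₐ[R] Polynomial (MvPolynomial σ R) :=
  aeval fun y => Polynomial.monomial (w y) (X y)

theorem weightedGradingHom_monomial (m : σ →₀ ℕ) (a : R) :
    weightedGradingHom w (monomial m a) =
      Polynomial.monomial (Finsupp.weight w m) (monomial m a) := by
  induction m using Finsupp.induction generalizing a with
  | zero => simp [weightedGradingHom]
  | single_add y k m hy hk ih =>
    rw [← one_mul a, ← monomial_mul, map_mul, ih, ← X_pow_eq_monomial, map_pow,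
      weightedGradingHom, aeval_X, Polynomial.monomial_pow, Polynomial.monomial_mul_monomial,
      map_add, Finsupp.weight_single, smul_eq_mul, mul_comm (w y)]

theorem coeff_weightedGradingHom (p : MvPolynomial σ R) (d : ℕ) :
    (weightedGradingHom w p).coeff d = weightedHomogeneousComponent w d p := by
  classical
  conv_lhs => rw [p.as_sum]
  rw [map_sum, Polynomial.finsetSum_coeff, weightedHomogeneousComponent_apply, Finset.sum_filter]
  refine Finset.sum_congr rfl fun m _ => ?_
  rw [weightedGradingHom_monomial, Polynomial.coeff_monomial]

theorem eval_one_weightedGradingHom (p : MvPolynomial σ R) :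
    (weightedGradingHom w p).eval 1 = p := by
  induction p using MvPolynomial.induction_on with
  | C a => simp [weightedGradingHom]
  | add p q hp hq => rw [map_add, Polynomial.eval_add, hp, hq]
  | mul_X p y hp => rw [map_mul, Polynomial.eval_mul, hp]; simp [weightedGradingHom]

attribute [local instance] weightedGradedAlgebra

variable {w}

theorem le_weight_of_mem_span {s : Set (MvPolynomial σ R)} {c : ℕ}
    (hs : ∀ g ∈ s, IsWeightedHomogeneous w g c) {p : MvPolynomial σ R}
    (hp : p ∈ Ideal.span s) : ∀ m ∈ p.support, c ≤ Finsupp.weight w m := by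
  classical
  induction hp using Submodule.span_induction with
  | mem g hg => exact fun m hm => (hs g hg (mem_support_iff.mp hm)).ge
  | zero => simp
  | add p q _ _ hp hq =>
    intro m hm
    rcases Finset.mem_union.mp (support_add hm) with h | h
    exacts [hp m h, hq m h]
  | smul f p _ hp =>
    intro m hm
    obtain ⟨m₁, -, m₂, hm₂, rfl⟩ := Finset.mem_add.mp (support_mul _ _ hm)
    rw [map_add]
    exact (hp m₂ hm₂).trans (Nat.le_add_left _ _)

theorem IsWeightedHomogeneous.eq_zero_of_mem_span {s : Set (MvPolynomial σ R)} {c k : ℕ}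
    (hs : ∀ g ∈ s, IsWeightedHomogeneous w g c) {p : MvPolynomial σ R}
    (hpk : IsWeightedHomogeneous w p k) (hp : p ∈ Ideal.span s) (hk : k < c) : p = 0 := by
  refine support_eq_empty.mp (Finset.eq_empty_of_forall_notMem fun m hm => ?_)
  have := le_weight_of_mem_span hs hp m hm
  rw [hpk (mem_support_iff.mp hm)] at this
  omega

noncomputable def quotientWeightedGradingHom (I : Ideal (MvPolynomial σ R))
    (hI : I.IsHomogeneous (weightedHomogeneousSubmodule R w)) :
    MvPolynomial σ R ⧸ I →+* Polynomial (MvPolynomial σ R ⧸ I) :=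
  Ideal.Quotient.lift I
    ((Polynomial.mapRingHom (Ideal.Quotient.mk I)).comp (weightedGradingHom w).toRingHom)
    fun p hp => Polynomial.ext fun d => by
      simp [coeff_weightedGradingHom, Ideal.Quotient.eq_zero_iff_mem,
        weightedHomogeneousComponent_mem_of_mem R w hI hp]

variable {I : Ideal (MvPolynomial σ R)}

theorem coeff_quotientWeightedGradingHom_mk
    (hI : I.IsHomogeneous (weightedHomogeneousSubmodule R w))
    (p : MvPolynomial σ R) (d : ℕ) :
    (quotientWeightedGradingHom I hI (Ideal.Quotient.mk I p)).coeff d =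
      Ideal.Quotient.mk I (weightedHomogeneousComponent w d p) := by
  simp [quotientWeightedGradingHom, coeff_weightedGradingHom]

theorem eval_one_quotientWeightedGradingHom
    (hI : I.IsHomogeneous (weightedHomogeneousSubmodule R w)) (x : MvPolynomial σ R ⧸ I) :
    (quotientWeightedGradingHom I hI x).eval 1 = x := by
  obtain ⟨p, rfl⟩ := Ideal.Quotient.mk_surjective x
  simp [quotientWeightedGradingHom, Polynomial.eval_map, eval_one_weightedGradingHom]

theorem quotientWeightedGradingHom_mk_of_isWeightedHomogeneous
    (hI : I.IsHomogeneous (weightedHomogeneousSubmodule R w)) {f : MvPolynomial σ R} {k : ℕ}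
    (hf : IsWeightedHomogeneous w f k) :
    quotientWeightedGradingHom I hI (Ideal.Quotient.mk I f) =
      Polynomial.monomial k (Ideal.Quotient.mk I f) := by
  ext d
  rw [coeff_quotientWeightedGradingHom_mk hI, Polynomial.coeff_monomial]
  split_ifs with hd
  · rw [← hd, hf.weightedHomogeneousComponent_same]
  · rw [hf.weightedHomogeneousComponent_ne d (Ne.symm hd), map_zero]

theorem mk_weightedHomogeneousComponent_of_eq_monomial
    (hI : I.IsHomogeneous (weightedHomogeneousSubmodule R w)) {p : MvPolynomial σ R} {d : ℕ}
    {b : MvPolynomial σ R ⧸ I}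
    (h : quotientWeightedGradingHom I hI (Ideal.Quotient.mk I p) = Polynomial.monomial d b) :
    Ideal.Quotient.mk I (weightedHomogeneousComponent w d p) = Ideal.Quotient.mk I p := by
  calc Ideal.Quotient.mk I (weightedHomogeneousComponent w d p)
      = (quotientWeightedGradingHom I hI (Ideal.Quotient.mk I p)).coeff d :=
        (coeff_quotientWeightedGradingHom_mk hI p d).symm
    _ = (quotientWeightedGradingHom I hI (Ideal.Quotient.mk I p)).eval 1 := by
        rw [h, Polynomial.coeff_monomial_same, Polynomial.eval_monomial, one_pow, mul_one]
    _ = Ideal.Quotient.mk I p := eval_one_quotientWeightedGradingHom hI _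

variable [IsDomain (MvPolynomial σ R ⧸ I)]

theorem exists_mul_eq_of_mk_eq_mul (hI : I.IsHomogeneous (weightedHomogeneousSubmodule R w))
    {f : MvPolynomial σ R} {k : ℕ} (hf : IsWeightedHomogeneous w f k) (hf0 : f ≠ 0)
    (hIk : ∀ p ∈ I, IsWeightedHomogeneous w p k → p = 0)
    {x y : MvPolynomial σ R ⧸ I} (h : Ideal.Quotient.mk I f = x * y) :
    ∃ u v, f = u * v ∧ Ideal.Quotient.mk I u = x ∧ Ideal.Quotient.mk I v = y := by
  have hmk : Ideal.Quotient.mk I f ≠ 0 := fun h0 =>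
    hf0 (hIk f (Ideal.Quotient.eq_zero_iff_mem.mp h0) hf)
  obtain ⟨p, rfl⟩ := Ideal.Quotient.mk_surjective x
  obtain ⟨q, rfl⟩ := Ideal.Quotient.mk_surjective y
  obtain ⟨d, e, b, c, hde, hp, hq⟩ := Polynomial.exists_eq_monomial_of_mul_eq_monomial hmk
    (by rw [← map_mul (quotientWeightedGradingHom I hI), ← h,
      quotientWeightedGradingHom_mk_of_isWeightedHomogeneous hI hf])
  refine ⟨weightedHomogeneousComponent w d p, weightedHomogeneousComponent w e q, ?_,
    mk_weightedHomogeneousComponent_of_eq_monomial hI hp,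
    mk_weightedHomogeneousComponent_of_eq_monomial hI hq⟩
  have hmem :
      f - weightedHomogeneousComponent w d p * weightedHomogeneousComponent w e q ∈ I := by
    rw [← Ideal.Quotient.eq_zero_iff_mem, map_sub, map_mul,
      mk_weightedHomogeneousComponent_of_eq_monomial hI hp,
      mk_weightedHomogeneousComponent_of_eq_monomial hI hq, h, sub_self]
  have hhom := hf.sub (hde ▸ (weightedHomogeneousComponent_isWeightedHomogeneous d p).mul
    (weightedHomogeneousComponent_isWeightedHomogeneous e q))
  exact sub_eq_zero.mp (hIk _ hmem hhom)

theorem irreducible_mk_of_isWeightedHomogeneous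
    (hI : I.IsHomogeneous (weightedHomogeneousSubmodule R w)) {f : MvPolynomial σ R} {k : ℕ}
    (hf : Irreducible f) (hfk : IsWeightedHomogeneous w f k) (hk : k ≠ 0)
    (hIk : ∀ p ∈ I, IsWeightedHomogeneous w p k → p = 0) :
    Irreducible (Ideal.Quotient.mk I f) := by
  have hmk : Ideal.Quotient.mk I f ≠ 0 := fun h0 =>
    hf.ne_zero (hIk f (Ideal.Quotient.eq_zero_iff_mem.mp h0) hfk)
  refine ⟨fun hu => hk ?_, fun x y h => ?_⟩
  · have := Polynomial.natDegree_eq_zero_of_isUnit (hu.map (quotientWeightedGradingHom I hI))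
    rwa [quotientWeightedGradingHom_mk_of_isWeightedHomogeneous hI hfk,
      Polynomial.natDegree_monomial_eq k hmk] at this
  · obtain ⟨u, v, huv, rfl, rfl⟩ := exists_mul_eq_of_mk_eq_mul hI hfk hf.ne_zero hIk h
    exact (hf.isUnit_or_isUnit huv).imp (IsUnit.map _) (IsUnit.map _)

end MvPolynomial

section Grading

variable (𝕂 : Type) [Field 𝕂] (r : ℕ) (a : Fin (r+1) → 𝕂 × 𝕂) (n : Fin (r+1) → ℕ)
  (l : ∀ i : Fin (r+1), Fin (n i) → ℕ)

noncomputable def relDegree : ℕ := ∏ y : Idx r n, n y.1 * l y.1 y.2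

noncomputable def relWeight (y : Idx r n) : ℕ := relDegree r n l / (n y.1 * l y.1 y.2)

theorem relWeight_mul (y : Idx r n) :
    relWeight r n l y * (n y.1 * l y.1 y.2) = relDegree r n l :=
  Nat.div_mul_cancel (Finset.dvd_prod_of_mem _ (Finset.mem_univ y))

variable {n l}

theorem relWeight_pos (hn : ∀ i, 0 < n i) (hl : ∀ i j, 0 < l i j) (y : Idx r n) :
    0 < relWeight r n l y := by
  have hc : 0 < relDegree r n l := Finset.prod_pos fun y _ => Nat.mul_pos (hn y.1) (hl y.1 y.2)
  rw [← relWeight_mul] at hc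
  exact Nat.pos_of_mul_pos_right hc

theorem relWeight_lt_relDegree (hn : ∀ i, 0 < n i) (hl : ∀ i j, 0 < l i j) {y : Idx r n}
    (hy : 1 < n y.1 * l y.1 y.2) : relWeight r n l y < relDegree r n l := by
  rw [← relWeight_mul]
  exact lt_mul_right (relWeight_pos r hn hl y) hy

theorem isWeightedHomogeneous_mono (hn : ∀ i, 0 < n i) (i : Fin (r+1)) :
    IsWeightedHomogeneous (relWeight r n l) (mono 𝕂 r n l i) (relDegree r n l) := by
  have hsum : ∑ j : Fin (n i), l i j * relWeight r n l ⟨i, j⟩ = relDegree r n l := by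
    refine Nat.eq_of_mul_eq_mul_left (hn i) ?_
    rw [Finset.mul_sum, Finset.sum_congr rfl fun j _ => ?_, Finset.sum_const, Finset.card_univ,
      Fintype.card_fin, smul_eq_mul]
    rw [← relWeight_mul r n l ⟨i, j⟩]
    ring
  rw [← hsum]
  refine IsWeightedHomogeneous.prod _ _ _ fun j _ => ?_
  simpa only [smul_eq_mul] using
    (isWeightedHomogeneous_X 𝕂 (relWeight r n l) ⟨i, j⟩).pow (l i j)

theorem isWeightedHomogeneous_gPoly (hn : ∀ i, 0 < n i) (i j k : Fin (r+1)) :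
    IsWeightedHomogeneous (relWeight r n l) (gPoly 𝕂 r a n l i j k) (relDegree r n l) :=
  (((isWeightedHomogeneous_mono 𝕂 r hn i).C_mul _).add
    ((isWeightedHomogeneous_mono 𝕂 r hn j).C_mul _)).add
    ((isWeightedHomogeneous_mono 𝕂 r hn k).C_mul _)

theorem isWeightedHomogeneous_of_mem_relIdeal_generators (hn : ∀ i, 0 < n i) :
    ∀ g ∈ { p | ∃ i j k : Fin (r+1), (j : ℕ) = (i : ℕ) + 1 ∧ (k : ℕ) = (i : ℕ) + 2 ∧
      p = gPoly 𝕂 r a n l i j k },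
      IsWeightedHomogeneous (relWeight r n l) g (relDegree r n l) := by
  rintro _ ⟨i, j, k, -, -, rfl⟩
  exact isWeightedHomogeneous_gPoly 𝕂 r a hn i j k

attribute [local instance] weightedGradedAlgebra in
theorem relIdeal_isHomogeneous (hn : ∀ i, 0 < n i) :
    (relIdeal 𝕂 r a n l).IsHomogeneous (weightedHomogeneousSubmodule 𝕂 (relWeight r n l)) :=
  Ideal.homogeneous_span _ _ fun g hg =>
    ⟨_, isWeightedHomogeneous_of_mem_relIdeal_generators 𝕂 r a hn g hg⟩

end Grading

theorem statement11_general (𝕂 : Type) [Field 𝕂]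
    (r : ℕ) (a : Fin (r+1) → 𝕂 × 𝕂)
    (n : Fin (r+1) → ℕ) (hn : ∀ i, 0 < n i)
    (l : ∀ i : Fin (r+1), Fin (n i) → ℕ) (hl : ∀ i j, 0 < l i j)
    (hUFD : IsDomain (RAnL 𝕂 r a n l) ∧
      ∀ f : RAnL 𝕂 r a n l, f ≠ 0 → ¬ IsUnit f →
        ∃ ms : Multiset (RAnL 𝕂 r a n l), (∀ p ∈ ms, Prime p) ∧ ms.prod = f)
    (x : Idx r n) (hx : 1 < n x.1 * l x.1 x.2) :
    Prime (Ideal.Quotient.mk (relIdeal 𝕂 r a n l) (X x)) := by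
  have := hUFD.1
  have hirr : Irreducible (Ideal.Quotient.mk (relIdeal 𝕂 r a n l) (X x)) :=
    irreducible_mk_of_isWeightedHomogeneous (relIdeal_isHomogeneous 𝕂 r a hn)
      X_prime.irreducible (isWeightedHomogeneous_X 𝕂 _ x) (relWeight_pos r hn hl x).ne'
      fun p hp hpx => hpx.eq_zero_of_mem_span
        (isWeightedHomogeneous_of_mem_relIdeal_generators 𝕂 r a hn) hp
        (relWeight_lt_relDegree r hn hl hx)
  obtain ⟨ms, hms, hprod⟩ := hUFD.2 _ hirr.ne_zero hirr.not_isUnit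
  obtain ⟨p, hp, rfl⟩ := prime_factors_irreducible hirr ⟨hms, hprod ▸ Associated.refl _⟩
  exact hp.symm.prime (hms p (Multiset.mem_singleton_self p))

/-- If `R(A,𝔫,L)` is a unique factorization domain (an integral domain in which every
nonzero nonunit is a product of primes) and `n_i l_{ij} > 1` holds for a given pair
`(i,j)`, then the class of `T_{ij}` is a prime element of `R(A,𝔫,L)`. -/
theorem statement11 (𝕂 : Type) [Field 𝕂] [IsAlgClosed 𝕂] [CharZero 𝕂]
    (r : ℕ) (hr : 1 ≤ r) (a : Fin (r+1) → 𝕂 × 𝕂)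
    (ha : ∀ i k : Fin (r+1), i ≠ k → LinearIndependent 𝕂 ![a i, a k])
    (n : Fin (r+1) → ℕ) (hn : ∀ i, 0 < n i)
    (l : ∀ i : Fin (r+1), Fin (n i) → ℕ) (hl : ∀ i j, 0 < l i j)
    (hUFD : IsDomain (RAnL 𝕂 r a n l) ∧
      ∀ f : RAnL 𝕂 r a n l, f ≠ 0 → ¬ IsUnit f →
        ∃ ms : Multiset (RAnL 𝕂 r a n l), (∀ p ∈ ms, Prime p) ∧ ms.prod = f)
    (x : Idx r n) (hx : 1 < n x.1 * l x.1 x.2) :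
    Prime (Ideal.Quotient.mk (relIdeal 𝕂 r a n l) (X x)) :=
  statement11_general 𝕂 r a n hn l hl hUFD x hx
end
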